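/- For every ε ∈ (1/2, 1), the mean recurrence time of the origin for the Gillis random walk is finite and equals Σ_{n≥1} n F_n = 2ε/(2ε − 1). -/

import Mathlib

open Filter

/-- Probability of a right step in the Gillis walk. -/
noncomputable def gR (ε : ℝ) (j : ℤ) : ℝ :=
  if j = 0 then 1 / 2 else (1 - ε / (j : ℝ)) / 2

/-- Probability of a left step in the Gillis walk. -/
noncomputable def gL (ε : ℝ) (j : ℤ) : ℝ :=
  if j = 0 then 1 / 2 else (1 + ε / (j : ℝ)) / 2

/-- Occupation probabilities of the Gillis walk started at the origin. -/
noncomputable def gP (ε : ℝ) : ℕ → ℤ → ℝ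
  | 0, j => if j = 0 then 1 else 0
  | n + 1, j => gR ε (j - 1) * gP ε n (j - 1) + gL ε (j + 1) * gP ε n (j + 1)

/-!
Let `Q_n` be the walk killed on its return to the origin, `t(n) = ∑ⱼ Q_n(j)` its survival
probability and `W(n) = ∑ⱼ j² Q_n(j)`. The renewal equation forces `F` to be the first-return
distribution, so `F(n+1) = t(n) - t(n+1)` and `∑ n F(n) = ∑ t(n)`. Away from the origin
`E[X_{n+1}² - X_n²] = 1 - 2ε`, hence `W(n+1) = W(n) - (2ε-1) t(n)` for `n ≥ 1` with `W(1) = 1`,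
and `∑_{m<N} t(m) = 1 + (1 - W(N))/(2ε-1)`. As `W ≥ 0`, the decreasing sequence `t` is summable,
so `n t(n) → 0`. The fourth moment grows at most linearly, so by Cauchy–Schwarz
`W(n)² ≤ t(n) ∑ⱼ j⁴ Q_n(j) ≤ 6 n t(n) → 0`, and `∑ n F(n) = 1 + 1/(2ε-1) = 2ε/(2ε-1)`.
-/

open Finset

section Walk

variable {ε : ℝ}

lemma gL_eq_gR_neg (ε : ℝ) (j : ℤ) : gL ε j = gR ε (-j) := by
  simp only [gL, gR, neg_eq_zero, Int.cast_neg, div_neg, sub_neg_eq_add]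

lemma gR_add_gL (ε : ℝ) (j : ℤ) : gR ε j + gL ε j = 1 := by
  unfold gR gL
  split_ifs <;> ring

lemma gR_nonneg (hε : |ε| ≤ 1) (j : ℤ) : 0 ≤ gR ε j := by
  unfold gR
  split_ifs with hj
  · norm_num
  · have hj1 : (1 : ℝ) ≤ |(j : ℝ)| := by exact_mod_cast Int.one_le_abs hj
    have : ε / j ≤ 1 := (le_abs_self _).trans <| by
      rw [abs_div]
      exact div_le_one_of_le₀ (hε.trans hj1) (abs_nonneg _)
    linarith

lemma gL_nonneg (hε : |ε| ≤ 1) (j : ℤ) : 0 ≤ gL ε j :=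
  gL_eq_gR_neg ε j ▸ gR_nonneg hε (-j)

lemma gP_succ (ε : ℝ) (n : ℕ) (j : ℤ) :
    gP ε (n + 1) j = gR ε (j - 1) * gP ε n (j - 1) + gL ε (j + 1) * gP ε n (j + 1) := rfl

noncomputable def gStep (ε : ℝ) (w : ℤ → ℝ) (j : ℤ) : ℝ :=
  gR ε j * w (j + 1) + gL ε j * w (j - 1)

lemma gStep_one (ε : ℝ) : gStep ε 1 = 1 := by
  ext j
  simp [gStep, gR_add_gL]

lemma gStep_zero (ε : ℝ) (w : ℤ → ℝ) : gStep ε w 0 = (w 1 + w (-1)) / 2 := by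
  simp only [gStep, gR, gL, if_pos, zero_add, zero_sub]
  ring

lemma gStep_sq {j : ℤ} (hj : j ≠ 0) :
    gStep ε (fun i => (i : ℝ) ^ 2) j = (j : ℝ) ^ 2 + (1 - 2 * ε) := by
  have hj' : (j : ℝ) ≠ 0 := Int.cast_ne_zero.mpr hj
  simp only [gStep, gR, gL, if_neg hj]
  push_cast
  field_simp
  ring

lemma gStep_pow_four {j : ℤ} (hj : j ≠ 0) :
    gStep ε (fun i => (i : ℝ) ^ 4) j
      = (j : ℝ) ^ 4 + (6 - 4 * ε) * (j : ℝ) ^ 2 + (1 - 4 * ε) := by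
  have hj' : (j : ℝ) ≠ 0 := Int.cast_ne_zero.mpr hj
  simp only [gStep, gR, gL, if_neg hj]
  push_cast
  field_simp
  ring

end Walk

/-- Taboo probabilities `Q_n(j)`: the walk from the origin is killed on its return to it. -/
noncomputable def gQ (ε : ℝ) : ℕ → ℤ → ℝ
  | 0, j => if j = 0 then 1 else 0
  | n + 1, j => if j = 0 then 0 else gR ε (j - 1) * gQ ε n (j - 1) + gL ε (j + 1) * gQ ε n (j + 1)

noncomputable def gF (ε : ℝ) : ℕ → ℝ
  | 0 => 0
  | n + 1 => gR ε (-1) * gQ ε n (-1) + gL ε 1 * gQ ε n 1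

section Taboo

variable {ε : ℝ}

lemma gQ_zero (ε : ℝ) (j : ℤ) : gQ ε 0 j = if j = 0 then 1 else 0 := rfl

lemma gQ_apply_zero (ε : ℝ) {n : ℕ} (hn : n ≠ 0) : gQ ε n 0 = 0 := by
  obtain ⟨m, rfl⟩ := Nat.exists_eq_succ_of_ne_zero hn
  rfl

/-- The mass that the killed walk would send to the origin is the first-return probability. -/
lemma gQ_succ (ε : ℝ) (n : ℕ) (j : ℤ) :
    gQ ε (n + 1) j = gR ε (j - 1) * gQ ε n (j - 1) + gL ε (j + 1) * gQ ε n (j + 1)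
      - if j = 0 then gF ε (n + 1) else 0 := by
  by_cases hj : j = 0
  · subst hj
    simp [gQ, gF]
  · simp [gQ, hj]

lemma gQ_eq_zero_of_lt_natAbs (ε : ℝ) {n : ℕ} {j : ℤ} (h : n < j.natAbs) : gQ ε n j = 0 := by
  induction n generalizing j with
  | zero => simp [gQ_zero, Int.natAbs_pos.mp h]
  | succ n ih =>
    have hj : j ≠ 0 := by omega
    simp [gQ, hj, ih (j := j - 1) (by omega), ih (j := j + 1) (by omega)]

lemma gQ_nonneg (hε : |ε| ≤ 1) (n : ℕ) (j : ℤ) : 0 ≤ gQ ε n j := by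
  induction n generalizing j with
  | zero => by_cases hj : j = 0 <;> simp [gQ_zero, hj]
  | succ n ih =>
    by_cases hj : j = 0
    · simp [gQ, hj]
    · simp only [gQ, if_neg hj]
      have := gR_nonneg hε (j - 1)
      have := gL_nonneg hε (j + 1)
      have := ih (j - 1)
      have := ih (j + 1)
      positivity

lemma gF_nonneg (hε : |ε| ≤ 1) (n : ℕ) : 0 ≤ gF ε n := by
  cases n with
  | zero => exact le_rfl
  | succ n =>
    have := gR_nonneg hε (-1)
    have := gL_nonneg hε 1
    have := gQ_nonneg hε n (-1)
    have := gQ_nonneg hε n 1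
    simp only [gF]
    positivity

lemma gF_one (ε : ℝ) : gF ε 1 = 0 := by
  simp [gF, gQ_zero]

lemma gP_eq_gQ_add_sum (ε : ℝ) (n : ℕ) (j : ℤ) :
    gP ε n j = gQ ε n j + ∑ k ∈ Icc 1 n, gF ε k * gP ε (n - k) j := by
  induction n generalizing j with
  | zero => simp [gP, gQ_zero]
  | succ n ih =>
    have hstep : ∀ k ∈ Icc 1 n, gF ε k * gP ε (n + 1 - k) j
        = gR ε (j - 1) * (gF ε k * gP ε (n - k) (j - 1))
          + gL ε (j + 1) * (gF ε k * gP ε (n - k) (j + 1)) := by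
      intro k hk
      rw [show n + 1 - k = n - k + 1 by grind, gP_succ]
      ring
    rw [sum_Icc_succ_top (by omega), Nat.sub_self, sum_congr rfl hstep, sum_add_distrib,
      ← mul_sum, ← mul_sum, gQ_succ, gP_succ, ih, ih]
    simp only [gP]
    split_ifs <;> ring

lemma gP_renewal (ε : ℝ) {n : ℕ} (hn : 1 ≤ n) :
    gP ε n 0 = ∑ k ∈ Icc 1 n, gF ε k * gP ε (n - k) 0 := by
  rw [gP_eq_gQ_add_sum, gQ_apply_zero ε (by omega), zero_add]

end Taboo

theorem renewal_unique {R : Type*} [Ring R] {P F G : ℕ → R} (hP : P 0 = 1)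
    (hF : ∀ n, 1 ≤ n → P n = ∑ k ∈ Icc 1 n, F k * P (n - k))
    (hG : ∀ n, 1 ≤ n → P n = ∑ k ∈ Icc 1 n, G k * P (n - k)) {n : ℕ} (hn : 1 ≤ n) :
    F n = G n := by
  induction n using Nat.strong_induction_on with
  | _ n ih =>
    obtain ⟨m, rfl⟩ := Nat.exists_eq_add_of_le' hn
    have hlower : ∑ k ∈ Icc 1 m, F k * P (m + 1 - k) = ∑ k ∈ Icc 1 m, G k * P (m + 1 - k) :=
      sum_congr rfl fun k hk => by rw [ih k (by grind) (by grind)]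
    have h := (hF _ hn).symm.trans (hG _ hn)
    rw [sum_Icc_succ_top hn, sum_Icc_succ_top hn, hlower, Nat.sub_self, hP] at h
    simpa using h

noncomputable def tabooMoment (ε : ℝ) (w : ℤ → ℝ) (n : ℕ) : ℝ := ∑' j, w j * gQ ε n j

section TabooMoment

variable {ε : ℝ}

lemma mul_gQ_eq_zero_of_notMem (ε : ℝ) (w : ℤ → ℝ) {n : ℕ} {j : ℤ}
    (hj : j ∉ Icc (-(n : ℤ)) n) : w j * gQ ε n j = 0 := by
  rw [mem_Icc] at hj
  rw [gQ_eq_zero_of_lt_natAbs ε (by omega), mul_zero]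

lemma summable_mul_gQ (ε : ℝ) (w : ℤ → ℝ) (n : ℕ) : Summable fun j => w j * gQ ε n j :=
  summable_of_ne_finset_zero fun _ => mul_gQ_eq_zero_of_notMem ε w

lemma tabooMoment_eq_sum (ε : ℝ) (w : ℤ → ℝ) (n : ℕ) :
    tabooMoment ε w n = ∑ j ∈ Icc (-(n : ℤ)) n, w j * gQ ε n j :=
  tsum_eq_sum fun _ => mul_gQ_eq_zero_of_notMem ε w

lemma tabooMoment_zero (ε : ℝ) (w : ℤ → ℝ) : tabooMoment ε w 0 = w 0 := by
  simp [tabooMoment, gQ_zero]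

lemma tabooMoment_succ (ε : ℝ) (w : ℤ → ℝ) (n : ℕ) :
    tabooMoment ε w (n + 1) = tabooMoment ε (gStep ε w) n - w 0 * gF ε (n + 1) := by
  have hR : HasSum (fun j => w j * (gR ε (j - 1) * gQ ε n (j - 1)))
      (∑' i, w (i + 1) * gR ε i * gQ ε n i) := by
    rw [← (Equiv.addRight (1 : ℤ)).hasSum_iff]
    simpa [Function.comp_def, mul_assoc] using
      (summable_mul_gQ ε (fun i => w (i + 1) * gR ε i) n).hasSum
  have hL : HasSum (fun j => w j * (gL ε (j + 1) * gQ ε n (j + 1)))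
      (∑' i, w (i - 1) * gL ε i * gQ ε n i) := by
    rw [← (Equiv.subRight (1 : ℤ)).hasSum_iff]
    simpa [Function.comp_def, mul_assoc] using
      (summable_mul_gQ ε (fun i => w (i - 1) * gL ε i) n).hasSum
  have hF : HasSum (fun j => w j * if j = 0 then gF ε (n + 1) else 0) (w 0 * gF ε (n + 1)) := by
    simpa using hasSum_single (f := fun j => w j * if j = 0 then gF ε (n + 1) else 0) 0
      (by simp +contextual)
  have hsplit : tabooMoment ε w (n + 1) = (∑' i, w (i + 1) * gR ε i * gQ ε n i)
      + (∑' i, w (i - 1) * gL ε i * gQ ε n i) - w 0 * gF ε (n + 1) := by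
    rw [← ((hR.add hL).sub hF).tsum_eq, tabooMoment]
    congr with j
    rw [gQ_succ]
    ring
  rw [hsplit, tabooMoment, ← (summable_mul_gQ ε _ n).tsum_add (summable_mul_gQ ε _ n)]
  congr with j
  simp only [gStep]
  ring

lemma tabooMoment_congr {n : ℕ} (hn : n ≠ 0) {w v : ℤ → ℝ} (h : ∀ j ≠ 0, w j = v j) :
    tabooMoment ε w n = tabooMoment ε v n := by
  unfold tabooMoment
  congr with j
  by_cases hj : j = 0
  · simp [hj, gQ_apply_zero ε hn]
  · rw [h j hj]

lemma tabooMoment_add (w v : ℤ → ℝ) (n : ℕ) :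
    tabooMoment ε (fun j => w j + v j) n = tabooMoment ε w n + tabooMoment ε v n := by
  simp only [tabooMoment_eq_sum, add_mul, sum_add_distrib]

lemma tabooMoment_const_mul (c : ℝ) (w : ℤ → ℝ) (n : ℕ) :
    tabooMoment ε (fun j => c * w j) n = c * tabooMoment ε w n := by
  simp only [tabooMoment_eq_sum, mul_sum, mul_assoc]

lemma tabooMoment_nonneg (hε : |ε| ≤ 1) {w : ℤ → ℝ} (hw : ∀ j, 0 ≤ w j) (n : ℕ) :
    0 ≤ tabooMoment ε w n :=
  tsum_nonneg fun j => mul_nonneg (hw j) (gQ_nonneg hε n j)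

lemma tabooMoment_one_nonneg (hε : |ε| ≤ 1) (n : ℕ) : 0 ≤ tabooMoment ε 1 n :=
  tabooMoment_nonneg hε (fun _ => zero_le_one) n

lemma sq_tabooMoment_le (hε : |ε| ≤ 1) (w : ℤ → ℝ) (n : ℕ) :
    tabooMoment ε w n ^ 2 ≤ tabooMoment ε 1 n * tabooMoment ε (fun j => w j ^ 2) n := by
  simp only [tabooMoment_eq_sum, Pi.one_apply, one_mul]
  exact sum_sq_le_sum_mul_sum_of_sq_le_mul _ (fun j _ => gQ_nonneg hε n j)
    (fun j _ => mul_nonneg (sq_nonneg _) (gQ_nonneg hε n j)) (fun j _ => le_of_eq (by ring))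

lemma tabooMoment_one_succ (ε : ℝ) (n : ℕ) :
    tabooMoment ε 1 (n + 1) = tabooMoment ε 1 n - gF ε (n + 1) := by
  simp [tabooMoment_succ, gStep_one]

lemma tabooMoment_sq_one (ε : ℝ) : tabooMoment ε (fun j => (j : ℝ) ^ 2) 1 = 1 := by
  rw [tabooMoment_succ, tabooMoment_zero, gStep_zero, gF_one]
  norm_num

lemma tabooMoment_sq_succ {n : ℕ} (hn : n ≠ 0) :
    tabooMoment ε (fun j => (j : ℝ) ^ 2) (n + 1)
      = tabooMoment ε (fun j => (j : ℝ) ^ 2) n - (2 * ε - 1) * tabooMoment ε 1 n := by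
  rw [tabooMoment_succ, tabooMoment_congr hn
      (v := fun j => (j : ℝ) ^ 2 + (1 - 2 * ε) * (1 : ℤ → ℝ) j)
      (fun j hj => by simp [gStep_sq hj]),
    tabooMoment_add, tabooMoment_const_mul, Int.cast_zero]
  ring

lemma tabooMoment_pow_four_succ {n : ℕ} (hn : n ≠ 0) :
    tabooMoment ε (fun j => (j : ℝ) ^ 4) (n + 1)
      = tabooMoment ε (fun j => (j : ℝ) ^ 4) n
        + (6 - 4 * ε) * tabooMoment ε (fun j => (j : ℝ) ^ 2) n
        + (1 - 4 * ε) * tabooMoment ε 1 n := by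
  rw [tabooMoment_succ, tabooMoment_congr hn
      (v := fun j => (j : ℝ) ^ 4 + (6 - 4 * ε) * (j : ℝ) ^ 2 + (1 - 4 * ε) * (1 : ℤ → ℝ) j)
      (fun j hj => by simp [gStep_pow_four hj]),
    tabooMoment_add, tabooMoment_add, tabooMoment_const_mul, tabooMoment_const_mul]
  simp

lemma tabooMoment_sq_le_one (h₁ : 1 / 2 ≤ ε) (h₂ : ε ≤ 1) {n : ℕ} (hn : 1 ≤ n) :
    tabooMoment ε (fun j => (j : ℝ) ^ 2) n ≤ 1 := by
  induction n, hn using Nat.le_induction with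
  | base => rw [tabooMoment_sq_one]
  | succ n hn ih =>
    have ht := tabooMoment_one_nonneg (abs_le.mpr ⟨by linarith, h₂⟩) n
    rw [tabooMoment_sq_succ (by omega)]
    nlinarith

lemma tabooMoment_pow_four_le (h₁ : 1 / 2 ≤ ε) (h₂ : ε ≤ 1) (n : ℕ) :
    tabooMoment ε (fun j => (j : ℝ) ^ 4) n ≤ 6 * n := by
  have hε : |ε| ≤ 1 := abs_le.mpr ⟨by linarith, h₂⟩
  induction n with
  | zero => simp [tabooMoment_zero]
  | succ n ih =>
    rcases Nat.eq_zero_or_pos n with rfl | hn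
    · rw [tabooMoment_succ, tabooMoment_zero, gStep_zero, gF_one]
      norm_num
    have hW := tabooMoment_sq_le_one h₁ h₂ hn
    have hW₀ := tabooMoment_nonneg hε (fun j => sq_nonneg (j : ℝ)) n
    have ht₀ := tabooMoment_one_nonneg hε n
    rw [tabooMoment_pow_four_succ hn.ne']
    push_cast
    nlinarith

lemma sq_tabooMoment_sq_le (h₁ : 1 / 2 ≤ ε) (h₂ : ε ≤ 1) (n : ℕ) :
    tabooMoment ε (fun j => (j : ℝ) ^ 2) n ^ 2 ≤ 6 * n * tabooMoment ε 1 n := by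
  have hε : |ε| ≤ 1 := abs_le.mpr ⟨by linarith, h₂⟩
  have hcs := sq_tabooMoment_le hε (fun j => (j : ℝ) ^ 2) n
  simp only [← pow_mul] at hcs
  calc _ ≤ _ := hcs
    _ ≤ tabooMoment ε 1 n * (6 * n) := by
      gcongr
      · exact tabooMoment_one_nonneg hε n
      · exact tabooMoment_pow_four_le h₁ h₂ n
    _ = _ := by ring

end TabooMoment

open Filter Topology

theorem Antitone.tendsto_nat_mul_of_summable {t : ℕ → ℝ} (ht : Antitone t) (hs : Summable t) :
    Tendsto (fun n => n * t n) atTop (𝓝 0) := by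
  have ht₀ : ∀ n, 0 ≤ t n := ht.le_of_tendsto hs.tendsto_atTop_zero
  have hS := hs.hasSum.tendsto_sum_nat
  have hS₂ := hS.comp (Nat.tendsto_div_const_atTop two_ne_zero)
  have hle : ∀ n : ℕ, (n : ℝ) * t n
      ≤ 2 * (∑ m ∈ range n, t m - ∑ m ∈ range (n / 2), t m) := by
    intro n
    rw [← sum_Ico_eq_sub _ (Nat.div_le_self n 2)]
    have hcard := card_nsmul_le_sum (Ico (n / 2) n) t (t n)
      (fun m hm => ht (mem_Ico.mp hm).2.le)
    rw [Nat.card_Ico, nsmul_eq_mul] at hcard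
    have hn : (n : ℝ) ≤ 2 * ((n - n / 2 : ℕ) : ℝ) := by exact_mod_cast (by omega)
    nlinarith [ht₀ n]
  refine squeeze_zero (fun n => mul_nonneg n.cast_nonneg (ht₀ n)) hle ?_
  simpa using (hS.sub hS₂).const_mul 2

lemma sum_range_succ_nat_mul_eq {R : Type*} [CommRing R] {t F : ℕ → R}
    (htF : ∀ n, t (n + 1) = t n - F (n + 1)) (N : ℕ) :
    ∑ n ∈ range (N + 1), (n : R) * F n = ∑ m ∈ range N, t m - N * t N := by
  induction N with
  | zero => simp
  | succ N ih =>
    rw [sum_range_succ, ih, sum_range_succ, htF]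
    push_cast
    ring

lemma sum_range_eq_of_drift {K : Type*} [Field K] {t W : ℕ → K} {c : K} (hc : c ≠ 0)
    (hW : ∀ n, 1 ≤ n → W (n + 1) = W n - c * t n) {N : ℕ} (hN : 1 ≤ N) :
    ∑ m ∈ range N, t m = t 0 + (W 1 - W N) / c := by
  induction N, hN using Nat.le_induction with
  | base => simp
  | succ N hN ih =>
    rw [sum_range_succ, ih, hW N hN]
    field_simp
    ring

/-- The drift alone gives `∑ t(m) = t(0) + (W(1) - lim W)/c`; the bound on `W²` forces
`lim W = 0`. -/
theorem hasSum_nat_mul_of_drift {t W F : ℕ → ℝ} {c C : ℝ} (hc : 0 < c)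
    (htF : ∀ n, t (n + 1) = t n - F (n + 1)) (hF : ∀ n, 0 ≤ F n) (ht : ∀ n, 0 ≤ t n)
    (hW : ∀ n, 1 ≤ n → W (n + 1) = W n - c * t n) (hW₀ : ∀ n, 0 ≤ W n)
    (hWt : ∀ n, W n ^ 2 ≤ C * n * t n) :
    HasSum (fun n => n * F n) (t 0 + W 1 / c) := by
  have hsum := fun N => sum_range_eq_of_drift hc.ne' hW (N := N)
  have hanti : Antitone t := antitone_nat_of_succ_le fun n => by linarith [htF n, hF (n + 1)]
  have hsummable : Summable t := by
    refine summable_of_sum_range_le ht (c := t 0 + W 1 / c) fun N => ?_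
    rcases Nat.eq_zero_or_pos N with rfl | hN
    · simpa using add_nonneg (ht 0) (div_nonneg (hW₀ 1) hc.le)
    · rw [hsum N hN]
      gcongr
      linarith [hW₀ N]
  have hnt := hanti.tendsto_nat_mul_of_summable hsummable
  have hWlim : Tendsto W atTop (𝓝 0) := by
    have hsq : Tendsto (fun n => W n ^ 2) atTop (𝓝 0) :=
      squeeze_zero (fun n => sq_nonneg _) (fun n => (hWt n).trans_eq (mul_assoc _ _ _))
        (by simpa using hnt.const_mul C)
    simpa [Real.sqrt_sq (hW₀ _)] using hsq.sqrt
  have ht_lim : Tendsto (fun N => ∑ m ∈ range N, t m) atTop (𝓝 (t 0 + W 1 / c)) := by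
    refine Tendsto.congr' (eventually_atTop.mpr ⟨1, fun N hN => (hsum N hN).symm⟩) ?_
    simpa using (tendsto_const_nhds.sub hWlim).div_const c |>.const_add (t 0)
  rw [hasSum_iff_tendsto_nat_of_nonneg (fun n => mul_nonneg n.cast_nonneg (hF n)),
    ← tendsto_add_atTop_iff_nat 1]
  simpa [sum_range_succ_nat_mul_eq htF] using ht_lim.sub hnt

theorem gillis_mean_recurrence_time_general (ε : ℝ) (hε : ε ∈ Set.Ioo (1 / 2 : ℝ) 1)
    (F : ℕ → ℝ)
    (hren : ∀ n : ℕ, 1 ≤ n → gP ε n 0 = ∑ k ∈ Finset.Icc 1 n, F k * gP ε (n - k) 0) :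
    HasSum (fun n : ℕ => (n : ℝ) * F n) (2 * ε / (2 * ε - 1)) := by
  obtain ⟨h₁, h₂⟩ := hε
  have habs : |ε| ≤ 1 := abs_le.mpr ⟨by linarith, h₂.le⟩
  have hc : 0 < 2 * ε - 1 := by linarith
  have hF : ∀ n : ℕ, (n : ℝ) * F n = n * gF ε n := by
    rintro (_ | n)
    · simp
    · rw [renewal_unique (P := fun n => gP ε n 0) rfl hren (fun _ => gP_renewal ε) n.succ_pos]
  have hlimit : 2 * ε / (2 * ε - 1)
      = tabooMoment ε 1 0 + tabooMoment ε (fun j => (j : ℝ) ^ 2) 1 / (2 * ε - 1) := by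
    rw [tabooMoment_zero, Pi.one_apply, tabooMoment_sq_one]
    field_simp [hc.ne']
    ring
  simp only [hF, hlimit]
  exact hasSum_nat_mul_of_drift hc (tabooMoment_one_succ ε) (gF_nonneg habs)
    (tabooMoment_one_nonneg habs) (fun n hn => tabooMoment_sq_succ (by omega))
    (tabooMoment_nonneg habs fun j => sq_nonneg (j : ℝ)) (sq_tabooMoment_sq_le h₁.le h₂.le)

/-- For `ε ∈ (1/2, 1)` the mean recurrence time of the origin of the Gillis walk is finite
and equals `Σ_{n≥1} n F_n = 2ε/(2ε−1)`. -/
theorem gillis_mean_recurrence_time (ε : ℝ) (hε : ε ∈ Set.Ioo (1 / 2 : ℝ) 1)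
    (F : ℕ → ℝ) (hF0 : F 0 = 0)
    (hren : ∀ n : ℕ, 1 ≤ n → gP ε n 0 = ∑ k ∈ Finset.Icc 1 n, F k * gP ε (n - k) 0) :
    HasSum (fun n : ℕ => (n : ℝ) * F n) (2 * ε / (2 * ε - 1)) :=
  gillis_mean_recurrence_time_general ε hε F hren
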